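/- arXiv:1807.03081 — 2 statements merged into one kernel-verified Lean document; each statement's English description precedes it below -/
import Mathlib

section
/- Let (H_n)_{n≥1} be a family of complex Hilbert spaces and let H be their Hilbert space direct sum (the lp-sum with exponent 2), with each H_n identified with its canonical image in H and with the convention H_0 = {0}. Let 0 < q < 1, let r, s be positive natural numbers, and let a_1, …, a_r and b_1, …, b_s be bounded linear operators on H such that each of these operators is graded of degree +1 or −1, i.e. for each such operator T there is ε ∈ {+1, −1} with T(H_n) ⊆ H_{n+ε} for every n ≥ 1. Assume that for all 1 ≤ i ≤ r, 1 ≤ j ≤ s and all n ≥ 1, the restriction of the commutator [a_i, b_j] = a_i b_j − b_j a_i to H_n has operator norm at most q^n. Assume further that for each n ≥ 1 a finite-dimensional subspace K_n ⊆ H_n is given, and, writing K for the closed subspace of H generated by the K_n, that a_i(K) ⊆ K for all 1 ≤ i ≤ r − 1 and that a_r vanishes on K. Then there exists a constant C > 0, independent of n, such that for every n ≥ 1 and every ξ ∈ K_n one has ‖a_r ⋯ a_1 b_1 ⋯ b_s ξ‖ ≤ C q^n ‖ξ‖. -/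
/-! The first `r - 1` factors of `A = a_r ⋯ a_1` preserve `K` and `a_r` kills it, so
`A B ξ = [A, B] ξ` for `ξ ∈ K_n`. By the Leibniz rule, `[A, B]` is a sum of words
`u [a_i, b_j] w` in which `w` is a product of at most `r + s` operators of degree `±1`. Hence
`w ξ` lies in some `H_m` with `m ≥ n - (r + s)`, where `[a_i, b_j]` has norm at most
`q ^ m ≤ q ^ n / q ^ (r + s)`. -/

open scoped ENNReal

section GradedOperators

variable {𝕜 E : Type*} [NontriviallyNormedField 𝕜] [SeminormedAddCommGroup E]
  [NormedSpace 𝕜 E] {G : ℕ → Set E}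

def LowersGradeAtMost (G : ℕ → Set E) (k : ℕ) (T : E →L[𝕜] E) : Prop :=
  ∀ m, ∀ v ∈ G m, ∃ m', m ≤ m' + k ∧ T v ∈ G m'

theorem LowersGradeAtMost.one : LowersGradeAtMost G 0 (1 : E →L[𝕜] E) :=
  fun m _ hv => ⟨m, le_rfl, hv⟩

theorem LowersGradeAtMost.mul {k l : ℕ} {S T : E →L[𝕜] E} (hS : LowersGradeAtMost G k S)
    (hT : LowersGradeAtMost G l T) : LowersGradeAtMost G (k + l) (S * T) := by
  intro m v hv
  obtain ⟨m₁, hm₁, hTv⟩ := hT m v hv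
  obtain ⟨m₂, hm₂, hSTv⟩ := hS m₁ _ hTv
  exact ⟨m₂, by omega, hSTv⟩

theorem LowersGradeAtMost.list_prod {l : List (E →L[𝕜] E)}
    (hl : ∀ T ∈ l, LowersGradeAtMost G 1 T) : LowersGradeAtMost G l.length l.prod := by
  induction l with
  | nil => exact LowersGradeAtMost.one
  | cons T l ih =>
    rw [List.prod_cons, List.length_cons, add_comm]
    exact (hl T List.mem_cons_self).mul (ih fun S hS => hl S (List.mem_cons_of_mem _ hS))

def HasGradedDecay (G : ℕ → Set E) (q : ℝ) (X : E →L[𝕜] E) : Prop :=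
  ∃ c, 0 ≤ c ∧ ∀ m, ∀ v ∈ G m, ‖X v‖ ≤ c * q ^ m * ‖v‖

variable {q : ℝ}

theorem HasGradedDecay.zero : HasGradedDecay G q (0 : E →L[𝕜] E) :=
  ⟨0, le_rfl, fun m v _ => by simp⟩

theorem HasGradedDecay.neg {X : E →L[𝕜] E} (hX : HasGradedDecay G q X) :
    HasGradedDecay G q (-X) := by
  simpa only [HasGradedDecay, neg_apply, norm_neg] using hX

theorem HasGradedDecay.add {X Y : E →L[𝕜] E} (hX : HasGradedDecay G q X)
    (hY : HasGradedDecay G q Y) : HasGradedDecay G q (X + Y) := by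
  obtain ⟨c, hc, hcX⟩ := hX
  obtain ⟨d, hd, hdY⟩ := hY
  refine ⟨c + d, by positivity, fun m v hv => ?_⟩
  calc ‖(X + Y) v‖ ≤ ‖X v‖ + ‖Y v‖ := norm_add_le _ _
    _ ≤ c * q ^ m * ‖v‖ + d * q ^ m * ‖v‖ := add_le_add (hcX m v hv) (hdY m v hv)
    _ = (c + d) * q ^ m * ‖v‖ := by ring

theorem HasGradedDecay.mul_left {X : E →L[𝕜] E} (hX : HasGradedDecay G q X)
    (T : E →L[𝕜] E) : HasGradedDecay G q (T * X) := by
  obtain ⟨c, hc, hcX⟩ := hX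
  refine ⟨‖T‖ * c, by positivity, fun m v hv => ?_⟩
  calc ‖T (X v)‖ ≤ ‖T‖ * ‖X v‖ := T.le_opNorm _
    _ ≤ ‖T‖ * (c * q ^ m * ‖v‖) := by gcongr; exact hcX m v hv
    _ = ‖T‖ * c * q ^ m * ‖v‖ := by ring

theorem HasGradedDecay.mul_right (hq0 : 0 < q) (hq1 : q ≤ 1) {X T : E →L[𝕜] E} {k : ℕ}
    (hX : HasGradedDecay G q X) (hT : LowersGradeAtMost G k T) :
    HasGradedDecay G q (X * T) := by
  obtain ⟨c, hc, hcX⟩ := hX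
  refine ⟨c * ‖T‖ / q ^ k, by positivity, fun m v hv => ?_⟩
  obtain ⟨m', hm', hTv⟩ := hT m v hv
  have hq : q ^ m' ≤ q ^ m / q ^ k := by
    rw [le_div_iff₀ (pow_pos hq0 k), ← pow_add]
    exact pow_le_pow_of_le_one hq0.le hq1 hm'
  calc ‖X (T v)‖ ≤ c * q ^ m' * ‖T v‖ := hcX m' _ hTv
    _ ≤ c * (q ^ m / q ^ k) * (‖T‖ * ‖v‖) := by gcongr; exact T.le_opNorm v
    _ = c * ‖T‖ / q ^ k * q ^ m * ‖v‖ := by ring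

theorem HasGradedDecay.lie_list_prod (hq0 : 0 < q) (hq1 : q ≤ 1) {X : E →L[𝕜] E}
    {l : List (E →L[𝕜] E)} (hl : ∀ T ∈ l, LowersGradeAtMost G 1 T)
    (hX : ∀ T ∈ l, HasGradedDecay G q ⁅X, T⁆) : HasGradedDecay G q ⁅X, l.prod⁆ := by
  induction l with
  | nil => simpa only [List.prod_nil, Ring.lie_def, mul_one, one_mul, sub_self] using .zero
  | cons T l ih =>
    have hl' : ∀ S ∈ l, LowersGradeAtMost G 1 S := fun S hS => hl S (List.mem_cons_of_mem _ hS)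
    have hleibniz : ⁅X, T * l.prod⁆ = T * ⁅X, l.prod⁆ + ⁅X, T⁆ * l.prod := by
      simp only [Ring.lie_def]; noncomm_ring
    rw [List.prod_cons, hleibniz]
    exact ((ih hl' fun S hS => hX S (List.mem_cons_of_mem _ hS)).mul_left T).add
      ((hX T List.mem_cons_self).mul_right hq0 hq1 (LowersGradeAtMost.list_prod hl'))

theorem HasGradedDecay.list_prod_lie (hq0 : 0 < q) (hq1 : q ≤ 1) {Y : E →L[𝕜] E}
    {l : List (E →L[𝕜] E)} (hl : ∀ T ∈ l, LowersGradeAtMost G 1 T)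
    (hY : ∀ T ∈ l, HasGradedDecay G q ⁅T, Y⁆) : HasGradedDecay G q ⁅l.prod, Y⁆ := by
  have lie_eq_neg : ∀ S T : E →L[𝕜] E, ⁅S, T⁆ = -⁅T, S⁆ := fun S T => by
    simp only [Ring.lie_def, neg_sub]
  rw [lie_eq_neg]
  exact (HasGradedDecay.lie_list_prod hq0 hq1 hl fun T hT => by
    simpa only [lie_eq_neg T Y, neg_neg] using (hY T hT).neg).neg

theorem HasGradedDecay.list_prod_lie_list_prod (hq0 : 0 < q) (hq1 : q ≤ 1)
    {la lb : List (E →L[𝕜] E)} (hla : ∀ T ∈ la, LowersGradeAtMost G 1 T)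
    (hlb : ∀ T ∈ lb, LowersGradeAtMost G 1 T)
    (h : ∀ S ∈ la, ∀ T ∈ lb, HasGradedDecay G q ⁅S, T⁆) :
    HasGradedDecay G q ⁅la.prod, lb.prod⁆ :=
  HasGradedDecay.lie_list_prod hq0 hq1 hlb fun T hT =>
    HasGradedDecay.list_prod_lie hq0 hq1 hla fun S hS => h S hS T hT

theorem List.prod_mapsTo {s : Set E} {l : List (E →L[𝕜] E)}
    (hl : ∀ T ∈ l, Set.MapsTo T s s) : Set.MapsTo l.prod s s := by
  induction l with
  | nil => exact Set.mapsTo_id s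
  | cons T l ih =>
    exact (hl T List.mem_cons_self).comp (ih fun S hS => hl S (List.mem_cons_of_mem _ hS))

theorem List.ofFn_reverse_prod_apply_eq_zero {s : Set E} {r : ℕ}
    (a : Fin (r + 1) → E →L[𝕜] E) (hinv : ∀ i : Fin r, Set.MapsTo (a i.castSucc) s s)
    (hlast : ∀ ξ ∈ s, a (Fin.last r) ξ = 0) {ξ : E} (hξ : ξ ∈ s) :
    (List.ofFn a).reverse.prod ξ = 0 := by
  rw [List.ofFn_succ', List.concat_eq_append, List.reverse_append, List.reverse_singleton,
    List.singleton_append, List.prod_cons, mul_apply_eq_comp]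
  refine hlast _ (List.prod_mapsTo (fun T hT => ?_) hξ)
  obtain ⟨i, rfl⟩ := List.mem_ofFn.mp (List.mem_reverse.mp hT)
  exact hinv i

end GradedOperators

theorem lp.single_zero_of_subsingleton {H : ℕ → Type*} [∀ n, NormedAddCommGroup (H n)]
    [Subsingleton (H 0)] (p : ℝ≥0∞) (x : H 0) : lp.single p 0 x = 0 := by
  rw [Subsingleton.elim x 0, lp.single_zero]

section DirectSum

variable {𝕜 : Type*} [NontriviallyNormedField 𝕜] {H : ℕ → Type*}
  [∀ n, NormedAddCommGroup (H n)] [∀ n, NormedSpace 𝕜 (H n)] [Subsingleton (H 0)]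
  {p : ℝ≥0∞} [Fact (1 ≤ p)]

theorem lowersGradeAtMost_one_of_shift {T : lp H p →L[𝕜] lp H p}
    (hT : (∀ n, 1 ≤ n → ∀ x : H n,
        T (lp.single p n x) ∈ Set.range (lp.single p (n + 1) : H (n + 1) → lp H p)) ∨
      (∀ n, 1 ≤ n → ∀ x : H n,
        T (lp.single p n x) ∈ Set.range (lp.single p (n - 1) : H (n - 1) → lp H p))) :
    LowersGradeAtMost (fun n => Set.range (lp.single p n)) 1 T := by
  rintro (_ | n) _ ⟨x, rfl⟩
  · refine ⟨0, Nat.zero_le _, 0, ?_⟩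
    rw [lp.single_zero, lp.single_zero_of_subsingleton, map_zero]
  · rcases hT with hup | hdown
    · exact ⟨n + 2, by omega, hup _ n.succ_pos x⟩
    · exact ⟨n, le_rfl, hdown _ n.succ_pos x⟩

theorem hasGradedDecay_of_norm_single_le {q : ℝ} {X : lp H p →L[𝕜] lp H p}
    (hX : ∀ n, 1 ≤ n → ∀ x : H n,
      ‖X (lp.single p n x)‖ ≤ q ^ n * ‖lp.single p n x‖) :
    HasGradedDecay (fun n => Set.range (lp.single p n)) q X := by
  refine ⟨1, zero_le_one, ?_⟩
  rintro (_ | n) _ ⟨x, rfl⟩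
  · simp only [lp.single_zero_of_subsingleton, map_zero, norm_zero, mul_zero, le_refl]
  · simpa only [one_mul] using hX _ n.succ_pos x

end DirectSum

/-- Let `(Hₙ)ₙ` be a family of complex Hilbert spaces (with the convention
`H₀ = {0}`, encoded by `Subsingleton (H 0)`) and let `lp H 2` be their Hilbert space direct
sum, each `Hₙ` being identified with its canonical image via `lp.single 2 n`. Let `0 < q < 1`,
let `r, s` be positive, and let `a₁, …, a_r, b₁, …, bₛ` be bounded operators on the direct sum,
each graded of degree `+1` or `−1` (it maps the image of `Hₙ` into the image of `H_{n+1}`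
for all `n ≥ 1`, or into the image of `H_{n−1}` for all `n ≥ 1`). Assume the restriction of
each commutator `[aᵢ, bⱼ]` to the image of `Hₙ` has norm at most `q ^ n` for all `n ≥ 1`.
Assume further that finite-dimensional subspaces `Kₙ ⊆ Hₙ` are given and, `Kc` being the
closed subspace of the direct sum generated by the (images of the) `Kₙ`, that
`aᵢ(Kc) ⊆ Kc` for `1 ≤ i ≤ r − 1` (here: indices `0, …, r−2`) and that `a_r` (here: the
index `r−1`) vanishes on `Kc`. Then there is a constant `C > 0`, independent of `n`, such
that for every `n ≥ 1` and every `ξ` in the image of `Kₙ`,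
`‖a_r ⋯ a₁ b₁ ⋯ bₛ ξ‖ ≤ C * q ^ n * ‖ξ‖`.
(With `0`-based indices, `a_r ⋯ a₁ = (List.ofFn a).reverse.prod` and
`b₁ ⋯ bₛ = (List.ofFn b).prod` as products in the ring of continuous linear maps.) -/
theorem graded_annihilation_estimate
    (H : ℕ → Type*) [∀ n, NormedAddCommGroup (H n)] [∀ n, InnerProductSpace ℂ (H n)]
    [Subsingleton (H 0)]
    (q : ℝ) (hq0 : 0 < q) (hq1 : q < 1)
    (r s : ℕ) (hr : 0 < r)
    (a : Fin r → (lp H 2 →L[ℂ] lp H 2)) (b : Fin s → (lp H 2 →L[ℂ] lp H 2))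
    (hgraded : ∀ T ∈ Set.range a ∪ Set.range b,
      (∀ n, 1 ≤ n → ∀ x : H n,
        T (lp.single 2 n x) ∈ Set.range (lp.single 2 (n + 1) : H (n + 1) → lp H 2)) ∨
      (∀ n, 1 ≤ n → ∀ x : H n,
        T (lp.single 2 n x) ∈ Set.range (lp.single 2 (n - 1) : H (n - 1) → lp H 2)))
    (hcomm : ∀ (i : Fin r) (j : Fin s) (n : ℕ), 1 ≤ n → ∀ x : H n,
      ‖(a i * b j - b j * a i) (lp.single 2 n x)‖ ≤ q ^ n * ‖lp.single 2 n x‖)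
    (K : ∀ n, Submodule ℂ (H n))
    (Kc : Submodule ℂ (lp H 2))
    (hKc : Kc = (Submodule.span ℂ
      (⋃ n ∈ {m : ℕ | 1 ≤ m}, lp.single 2 n '' ((K n : Set (H n))))).topologicalClosure)
    (hKinv : ∀ i : Fin r, (i : ℕ) < r - 1 → ∀ ξ ∈ Kc, a i ξ ∈ Kc)
    (hKlast : ∀ ξ ∈ Kc, a ⟨r - 1, by omega⟩ ξ = 0) :
    ∃ C > 0, ∀ n, 1 ≤ n → ∀ x : H n, x ∈ K n →
      ‖((List.ofFn a).reverse.prod * (List.ofFn b).prod) (lp.single 2 n x)‖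
        ≤ C * q ^ n * ‖lp.single 2 n x‖ := by
  obtain ⟨r, rfl⟩ : ∃ r', r = r' + 1 := ⟨r - 1, by omega⟩
  set A := (List.ofFn a).reverse.prod
  set B := (List.ofFn b).prod
  have hlow : ∀ T ∈ Set.range a ∪ Set.range b,
      LowersGradeAtMost (fun n => Set.range (lp.single 2 n)) 1 T :=
    fun T hT => lowersGradeAtMost_one_of_shift (hgraded T hT)
  obtain ⟨c, hc0, hc⟩ : HasGradedDecay (fun n => Set.range (lp.single 2 n)) q ⁅A, B⁆ := by
    refine .list_prod_lie_list_prod hq0 hq1.le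
      (fun T hT => hlow T (.inl (List.mem_ofFn.mp (List.mem_reverse.mp hT))))
      (fun T hT => hlow T (.inr (List.mem_ofFn.mp hT))) fun S hS T hT => ?_
    obtain ⟨i, rfl⟩ := List.mem_ofFn.mp (List.mem_reverse.mp hS)
    obtain ⟨j, rfl⟩ := List.mem_ofFn.mp hT
    exact hasGradedDecay_of_norm_single_le (hcomm i j)
  have hAKc : ∀ ξ ∈ Kc, A ξ = 0 := fun ξ hξ =>
    List.ofFn_reverse_prod_apply_eq_zero a (fun i => hKinv i.castSucc i.isLt) hKlast hξ
  refine ⟨c + 1, by positivity, fun n hn x hx => ?_⟩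
  have hxKc : lp.single 2 n x ∈ Kc := by
    rw [hKc]
    exact Submodule.le_topologicalClosure _
      (Submodule.subset_span (Set.mem_biUnion hn ⟨x, hx, rfl⟩))
  calc ‖(A * B) (lp.single 2 n x)‖ = ‖⁅A, B⁆ (lp.single 2 n x)‖ := by
        rw [Ring.lie_def, sub_apply, mul_apply_eq_comp B, hAKc _ hxKc, map_zero, sub_zero]
    _ ≤ c * q ^ n * ‖lp.single 2 n x‖ := hc n _ ⟨x, rfl⟩
    _ ≤ (c + 1) * q ^ n * ‖lp.single 2 n x‖ := by gcongr; linarith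
end

section
/- Let (H_n)_{n≥1} be a family of complex Hilbert spaces and let H be their Hilbert space direct sum (the lp-sum with exponent 2), with each H_n identified with its canonical image in H and with the convention H_0 = {0}. Let 0 < q < 1, let r, s be positive natural numbers, and let a_1, …, a_r and b_1, …, b_s be bounded linear operators on H such that each of these operators is graded of degree +1 or −1, i.e. for each such operator T there is ε ∈ {+1, −1} with T(H_n) ⊆ H_{n+ε} for every n ≥ 1. Assume that for all 1 ≤ i ≤ r, 1 ≤ j ≤ s and all n ≥ 1, the restriction of the commutator [a_i, b_j] = a_i b_j − b_j a_i to H_n has operator norm at most q^n. Then there exists a constant C > 0, independent of n, such that for every n ≥ 1 and every ξ ∈ H_n one has ‖a_r ⋯ a_1 b_1 ⋯ b_s ξ − b_1 ⋯ b_s a_r ⋯ a_1 ξ‖ ≤ C q^n ‖ξ‖. -/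
open scoped ENNReal

/-!
The operators `T` with `‖T ξ‖ ≤ c qⁿ ‖ξ‖` on every `Hₙ` form a left ideal `I` of the operator
ring. A graded operator shifts the degree by one, so it costs at most a factor `q + q⁻¹` when
composed on the right: graded operators lie in the idealizer `{m | I m ⊆ I}`. The Leibniz
expansions `[x, yB] = y[x, B] + [x, y]B` and `[xA, B] = x[A, B] + [x, B]A` then show, by
induction on the number of factors, that the commutator of the two products lies in `I`.
-/

namespace Ideal

variable {R : Type*} [Ring R] (I : Ideal R)

def idealizer : Submonoid R where
  carrier := {m | ∀ t ∈ I, t * m ∈ I}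
  one_mem' t ht := by rwa [mul_one]
  mul_mem' ha hb t ht := by rw [← mul_assoc]; exact hb _ (ha t ht)

variable {I}

theorem mul_mem_of_mem_idealizer {t m : R} (ht : t ∈ I) (hm : m ∈ I.idealizer) : t * m ∈ I :=
  hm t ht

theorem mul_sub_list_prod_mul_mem {x : R} {L : List R}
    (hL : ∀ y ∈ L, y ∈ I.idealizer ∧ x * y - y * x ∈ I) : x * L.prod - L.prod * x ∈ I := by
  induction L with
  | nil => simp
  | cons y L ih =>
    have hL' : ∀ z ∈ L, z ∈ I.idealizer ∧ x * z - z * x ∈ I := fun z hz ↦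
      hL z (List.mem_cons_of_mem y hz)
    have leibniz : x * (y * L.prod) - y * L.prod * x =
        y * (x * L.prod - L.prod * x) + (x * y - y * x) * L.prod := by noncomm_ring
    rw [List.prod_cons, leibniz]
    exact I.add_mem (I.mul_mem_left y (ih hL')) <| mul_mem_of_mem_idealizer
      (hL y List.mem_cons_self).2 (Submonoid.list_prod_mem _ fun z hz ↦ (hL' z hz).1)

theorem list_prod_mul_sub_list_prod_mul_mem {La Lb : List R}
    (ha : ∀ x ∈ La, x ∈ I.idealizer) (hb : ∀ y ∈ Lb, y ∈ I.idealizer)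
    (hab : ∀ x ∈ La, ∀ y ∈ Lb, x * y - y * x ∈ I) :
    La.prod * Lb.prod - Lb.prod * La.prod ∈ I := by
  induction La with
  | nil => simp
  | cons x La ih =>
    have ha' : ∀ z ∈ La, z ∈ I.idealizer := fun z hz ↦ ha z (List.mem_cons_of_mem x hz)
    have leibniz : x * La.prod * Lb.prod - Lb.prod * (x * La.prod) =
        x * (La.prod * Lb.prod - Lb.prod * La.prod) + (x * Lb.prod - Lb.prod * x) * La.prod := by
      noncomm_ring
    rw [List.prod_cons, leibniz]
    refine I.add_mem (I.mul_mem_left x (ih ha' fun z hz ↦ hab z (List.mem_cons_of_mem x hz))) ?_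
    exact mul_mem_of_mem_idealizer
      (mul_sub_list_prod_mul_mem fun y hy ↦ ⟨hb y hy, hab x List.mem_cons_self y hy⟩)
      (Submonoid.list_prod_mem _ ha')

end Ideal

theorem pow_le_add_inv_mul_pow {q : ℝ} (hq : 0 < q) {m n : ℕ} (hn : 1 ≤ n)
    (hm : m = n + 1 ∨ m = n - 1) : q ^ m ≤ (q + q⁻¹) * q ^ n := by
  have hn' : q ^ n = q * q ^ (n - 1) := by rw [← pow_succ', Nat.sub_add_cancel hn]
  rcases hm with rfl | rfl
  · rw [pow_succ', add_mul]
    exact le_add_of_nonneg_right (by positivity)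
  · rw [add_mul, hn', inv_mul_cancel_left₀ hq.ne']
    exact le_add_of_nonneg_left (by positivity)

namespace lp

variable {𝕜 : Type*} [NontriviallyNormedField 𝕜] {E : ℕ → Type*}
  [∀ n, NormedAddCommGroup (E n)] [∀ n, NormedSpace 𝕜 (E n)] {p : ℝ≥0∞} [Fact (1 ≤ p)]

def IsGraded (S : lp E p →L[𝕜] lp E p) : Prop :=
  ∀ n, 1 ≤ n → ∀ x : E n,
    S (lp.single p n x) ∈ Set.range (lp.single p (n + 1)) ∪ Set.range (lp.single p (n - 1))

def decayIdeal (q : ℝ) : Ideal (lp E p →L[𝕜] lp E p) where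
  carrier := {T | ∃ c, 0 ≤ c ∧ ∀ n, 1 ≤ n → ∀ x : E n,
    ‖T (lp.single p n x)‖ ≤ c * q ^ n * ‖lp.single p n x‖}
  zero_mem' := ⟨0, le_rfl, fun n _ x ↦ by simp⟩
  add_mem' := by
    rintro S T ⟨c, hc, hS⟩ ⟨d, hd, hT⟩
    refine ⟨c + d, add_nonneg hc hd, fun n hn x ↦ ?_⟩
    calc ‖(S + T) (lp.single p n x)‖
        ≤ ‖S (lp.single p n x)‖ + ‖T (lp.single p n x)‖ := norm_add_le _ _
      _ ≤ c * q ^ n * ‖lp.single p n x‖ + d * q ^ n * ‖lp.single p n x‖ :=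
          add_le_add (hS n hn x) (hT n hn x)
      _ = (c + d) * q ^ n * ‖lp.single p n x‖ := by ring
  smul_mem' := by
    rintro S T ⟨c, hc, hT⟩
    refine ⟨‖S‖ * c, by positivity, fun n hn x ↦ ?_⟩
    calc ‖S (T (lp.single p n x))‖ ≤ ‖S‖ * ‖T (lp.single p n x)‖ := S.le_opNorm _
      _ ≤ ‖S‖ * (c * q ^ n * ‖lp.single p n x‖) := by gcongr; exact hT n hn x
      _ = ‖S‖ * c * q ^ n * ‖lp.single p n x‖ := by ring

theorem IsGraded.mem_idealizer_decayIdeal [Subsingleton (E 0)] {q : ℝ} (hq : 0 < q)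
    {S : lp E p →L[𝕜] lp E p} (hS : IsGraded S) : S ∈ (decayIdeal q).idealizer := by
  rintro T ⟨c, hc, hT⟩
  refine ⟨c * (q + q⁻¹) * ‖S‖, by positivity, fun n hn x ↦ ?_⟩
  obtain ⟨m, hm, y, hy⟩ : ∃ m, (m = n + 1 ∨ m = n - 1) ∧
      ∃ y : E m, lp.single p m y = S (lp.single p n x) := by
    rcases hS n hn x with ⟨y, hy⟩ | ⟨y, hy⟩
    exacts [⟨_, .inl rfl, y, hy⟩, ⟨_, .inr rfl, y, hy⟩]
  rcases Nat.eq_zero_or_pos m with rfl | hm0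
  · rw [Subsingleton.elim y 0, lp.single_zero] at hy
    change ‖T (S _)‖ ≤ _
    rw [← hy, map_zero, norm_zero]
    positivity
  calc ‖T (S (lp.single p n x))‖ ≤ c * q ^ m * ‖S (lp.single p n x)‖ := hy ▸ hT m hm0 y
    _ ≤ c * ((q + q⁻¹) * q ^ n) * (‖S‖ * ‖lp.single p n x‖) := by
        gcongr
        exacts [pow_le_add_inv_mul_pow hq hn hm, S.le_opNorm _]
    _ = c * (q + q⁻¹) * ‖S‖ * q ^ n * ‖lp.single p n x‖ := by ring

end lp

theorem graded_commutator_estimate_general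
    (H : ℕ → Type*) [∀ n, NormedAddCommGroup (H n)] [∀ n, InnerProductSpace ℂ (H n)]
    [Subsingleton (H 0)]
    (q : ℝ) (hq0 : 0 < q)
    (r s : ℕ)
    (a : Fin r → (lp H 2 →L[ℂ] lp H 2)) (b : Fin s → (lp H 2 →L[ℂ] lp H 2))
    (hgraded : ∀ T ∈ Set.range a ∪ Set.range b,
      (∀ n, 1 ≤ n → ∀ x : H n,
        T (lp.single 2 n x) ∈ Set.range (lp.single 2 (n + 1) : H (n + 1) → lp H 2)) ∨
      (∀ n, 1 ≤ n → ∀ x : H n,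
        T (lp.single 2 n x) ∈ Set.range (lp.single 2 (n - 1) : H (n - 1) → lp H 2)))
    (hcomm : ∀ (i : Fin r) (j : Fin s) (n : ℕ), 1 ≤ n → ∀ x : H n,
      ‖(a i * b j - b j * a i) (lp.single 2 n x)‖ ≤ q ^ n * ‖lp.single 2 n x‖) :
    ∃ C > 0, ∀ n, 1 ≤ n → ∀ x : H n,
      ‖((List.ofFn a).reverse.prod * (List.ofFn b).prod) (lp.single 2 n x) -
          ((List.ofFn b).prod * (List.ofFn a).reverse.prod) (lp.single 2 n x)‖
        ≤ C * q ^ n * ‖lp.single 2 n x‖ := by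
  have graded : ∀ T ∈ Set.range a ∪ Set.range b, T ∈ (lp.decayIdeal (𝕜 := ℂ) q).idealizer :=
    fun T hT ↦ lp.IsGraded.mem_idealizer_decayIdeal hq0 fun n hn x ↦
      (hgraded T hT).imp (· n hn x) (· n hn x)
  obtain ⟨c, hc, hbound⟩ := Ideal.list_prod_mul_sub_list_prod_mul_mem
    (I := lp.decayIdeal q) (La := (List.ofFn a).reverse) (Lb := List.ofFn b)
    (by simpa using fun i ↦ graded _ (.inl ⟨i, rfl⟩))
    (by simpa using fun j ↦ graded _ (.inr ⟨j, rfl⟩))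
    (by simpa using fun i j ↦ ⟨1, zero_le_one, fun n hn x ↦ by simpa using hcomm i j n hn x⟩)
  refine ⟨c + 1, by positivity, fun n hn x ↦ ?_⟩
  rw [← sub_apply]
  exact (hbound n hn x).trans (by gcongr; linarith)

/-- Let `(Hₙ)ₙ` be a family of complex Hilbert spaces (with the convention
`H₀ = {0}`, encoded by `Subsingleton (H 0)`) and let `lp H 2` be their Hilbert space direct
sum, each `Hₙ` being identified with its canonical image via `lp.single 2 n`. Let `0 < q < 1`,
let `r, s` be positive, and let `a₁, …, a_r, b₁, …, bₛ` be bounded operators on the direct sum,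
each graded of degree `+1` or `−1` (it maps the image of `Hₙ` into the image of `H_{n+1}`
for all `n ≥ 1`, or into the image of `H_{n−1}` for all `n ≥ 1`). Assume the restriction of
each commutator `[aᵢ, bⱼ]` to the image of `Hₙ` has norm at most `q ^ n` for all `n ≥ 1`.
Then there is a constant `C > 0`, independent of `n`, such that for every `n ≥ 1` and every
`ξ` in the image of `Hₙ`,
`‖a_r ⋯ a₁ b₁ ⋯ bₛ ξ − b₁ ⋯ bₛ a_r ⋯ a₁ ξ‖ ≤ C * q ^ n * ‖ξ‖`.
(The products of operators are compositions, realized as products in the ring of continuous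
linear maps; with `0`-based indices, `a_r ⋯ a₁ = (List.ofFn a).reverse.prod` and
`b₁ ⋯ bₛ = (List.ofFn b).prod`.) -/
theorem graded_commutator_estimate
    (H : ℕ → Type*) [∀ n, NormedAddCommGroup (H n)] [∀ n, InnerProductSpace ℂ (H n)]
    [∀ n, CompleteSpace (H n)] [Subsingleton (H 0)]
    (q : ℝ) (hq0 : 0 < q) (hq1 : q < 1)
    (r s : ℕ) (hr : 0 < r) (hs : 0 < s)
    (a : Fin r → (lp H 2 →L[ℂ] lp H 2)) (b : Fin s → (lp H 2 →L[ℂ] lp H 2))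
    (hgraded : ∀ T ∈ Set.range a ∪ Set.range b,
      (∀ n, 1 ≤ n → ∀ x : H n,
        T (lp.single 2 n x) ∈ Set.range (lp.single 2 (n + 1) : H (n + 1) → lp H 2)) ∨
      (∀ n, 1 ≤ n → ∀ x : H n,
        T (lp.single 2 n x) ∈ Set.range (lp.single 2 (n - 1) : H (n - 1) → lp H 2)))
    (hcomm : ∀ (i : Fin r) (j : Fin s) (n : ℕ), 1 ≤ n → ∀ x : H n,
      ‖(a i * b j - b j * a i) (lp.single 2 n x)‖ ≤ q ^ n * ‖lp.single 2 n x‖) :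
    ∃ C > 0, ∀ n, 1 ≤ n → ∀ x : H n,
      ‖((List.ofFn a).reverse.prod * (List.ofFn b).prod) (lp.single 2 n x) -
          ((List.ofFn b).prod * (List.ofFn a).reverse.prod) (lp.single 2 n x)‖
        ≤ C * q ^ n * ‖lp.single 2 n x‖ :=
  graded_commutator_estimate_general H q hq0 r s a b hgraded hcomm
end
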